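/- The representation of a value of a multi-bit word type 2ⁿ (n a power of 2) contains exactly n cells, none of which is undefined, and equals the big-endian binary representation of the value's numeric interpretation. -/

import Mathlib

inductive Ty : Type
  | unit : Ty
  | sum : Ty → Ty → Ty
  | prod : Ty → Ty → Ty

def Ty.interp : Ty → Type
  | .unit => Unit
  | .sum a b => Sum a.interp b.interp
  | .prod a b => a.interp × b.interp

inductive Term : Ty → Ty → Type
  | iden {A : Ty} : Term A A
def Ty.bitSize : Ty → ℕ
  | .unit => 0
  | .sum a b => 1 + max a.bitSize b.bitSize
  | .prod a b => a.bitSize + b.bitSize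

def padl (a b : Ty) : ℕ := max a.bitSize b.bitSize - a.bitSize
def padr (a b : Ty) : ℕ := max a.bitSize b.bitSize - b.bitSize

abbrev Cell := Option Bool

def Ty.encode : (A : Ty) → A.interp → List Cell
  | .unit, _ => []
  | .sum a b, Sum.inl x => (some false :: List.replicate (padl a b) none) ++ a.encode x
  | .sum a b, Sum.inr y => (some true :: List.replicate (padr a b) none) ++ b.encode y
  | .prod a b, x => a.encode x.1 ++ b.encode x.2

def Bit : Ty := .sum .unit .unit

def bitVal : Bit.interp → ℕ
  | Sum.inl _ => 0
  | Sum.inr _ => 1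

def Word : ℕ → Ty
  | 0 => Bit
  | n + 1 => .prod (Word n) (Word n)

def wordVal : (k : ℕ) → (Word k).interp → ℕ
  | 0, b => bitVal b
  | k + 1, x => wordVal k x.1 * 2 ^ 2 ^ k + wordVal k x.2

/-- The big-endian binary representation of `m` in `n` bits, as a list of defined cells. -/
def bigEndian (n m : ℕ) : List Cell :=
  (List.range n).map fun i => some (Nat.testBit m (n - 1 - i))

lemma testBit_split {b n : ℕ} (a : ℕ) (hb : b < 2 ^ n) (i : ℕ) :
    (a * 2 ^ n + b).testBit i = if i < n then b.testBit i else a.testBit (i - n) := by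
  split
  · next h =>
    rw [Nat.testBit_eq_decide_div_mod_eq, Nat.testBit_eq_decide_div_mod_eq]
    have h2 : 2 ^ n = 2 ^ (n - i) * 2 ^ i := by
      rw [← pow_add]; congr 1; omega
    have key : (a * 2 ^ n + b) / 2 ^ i = a * 2 ^ (n - i) + b / 2 ^ i := by
      rw [h2, ← mul_assoc, Nat.add_comm,
        Nat.add_mul_div_right _ _ (Nat.two_pow_pos i), Nat.add_comm]
    rw [key]
    have hni : n - i = (n - i - 1) + 1 := by omega
    rw [hni, pow_succ, ← mul_assoc, Nat.mul_comm _ 2, Nat.mul_add_mod]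
  · next h =>
    rw [Nat.testBit_eq_decide_div_mod_eq, Nat.testBit_eq_decide_div_mod_eq]
    have h2 : 2 ^ i = 2 ^ n * 2 ^ (i - n) := by
      rw [← pow_add]; congr 1; omega
    have key : (a * 2 ^ n + b) / 2 ^ i = a / 2 ^ (i - n) := by
      rw [h2, ← Nat.div_div_eq_div_mul, Nat.add_comm,
        Nat.add_mul_div_right _ _ (Nat.two_pow_pos n),
        Nat.div_eq_of_lt hb, Nat.zero_add]
    rw [key]

lemma bigEndian_append {n a b : ℕ} (hb : b < 2 ^ n) :
    bigEndian (n + n) (a * 2 ^ n + b) = bigEndian n a ++ bigEndian n b := by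
  unfold bigEndian
  rw [List.range_add, List.map_append, List.map_map]
  congr 1
  · apply List.map_congr_left
    intro i hi
    rw [List.mem_range] at hi
    have h1 : ¬ (n + n - 1 - i < n) := by omega
    have h2 : n + n - 1 - i - n = n - 1 - i := by omega
    rw [testBit_split a hb, if_neg h1, h2]
  · apply List.map_congr_left
    intro i hi
    rw [List.mem_range] at hi
    simp only [Function.comp]
    have h2 : n + n - 1 - (n + i) = n - 1 - i := by omega
    rw [testBit_split a hb, h2, if_pos (by omega)]

lemma wordVal_lt (k : ℕ) (v : (Word k).interp) : wordVal k v < 2 ^ 2 ^ k := by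
  induction k with
  | zero =>
    cases v with
    | inl u => simp [wordVal, bitVal]
    | inr u => simp [wordVal, bitVal]
  | succ k ih =>
    have h1 := ih v.1
    have h2 := ih v.2
    have hpow : (2 : ℕ) ^ 2 ^ (k + 1) = 2 ^ 2 ^ k * 2 ^ 2 ^ k := by
      rw [← pow_add]; congr 1; omega
    rw [hpow]
    calc wordVal (k + 1) v = wordVal k v.1 * 2 ^ 2 ^ k + wordVal k v.2 := rfl
      _ < wordVal k v.1 * 2 ^ 2 ^ k + 2 ^ 2 ^ k := by omega
      _ = (wordVal k v.1 + 1) * 2 ^ 2 ^ k := by ring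
      _ ≤ 2 ^ 2 ^ k * 2 ^ 2 ^ k := by
          apply Nat.mul_le_mul_right
          omega

theorem word_encode_bigEndian (k : ℕ) (v : (Word k).interp) :
    ((Word k).encode v).length = 2 ^ k ∧
    (∀ c ∈ (Word k).encode v, c ≠ none) ∧
    (Word k).encode v = bigEndian (2 ^ k) (wordVal k v) := by
  induction k with
  | zero =>
    cases v with
    | inl u =>
      refine ⟨rfl, ?_, ?_⟩ <;>
        simp [Word, Bit, Ty.encode, padl, Ty.bitSize, bigEndian, wordVal, bitVal]
    | inr u =>
      refine ⟨rfl, ?_, ?_⟩ <;>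
        simp [Word, Bit, Ty.encode, padr, Ty.bitSize, bigEndian, wordVal, bitVal]
  | succ k ih =>
    obtain ⟨l1, m1, e1⟩ := ih v.1
    obtain ⟨l2, m2, e2⟩ := ih v.2
    have henc : (Word (k + 1)).encode v = (Word k).encode v.1 ++ (Word k).encode v.2 := rfl
    have hpow : (2 : ℕ) ^ (k + 1) = 2 ^ k + 2 ^ k := by omega
    refine ⟨?_, ?_, ?_⟩
    · rw [henc, List.length_append, l1, l2, hpow]
    · intro c hc
      rw [henc, List.mem_append] at hc
      rcases hc with h | h
      · exact m1 c h
      · exact m2 c h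
    · rw [henc, e1, e2]
      have hv : wordVal (k + 1) v = wordVal k v.1 * 2 ^ 2 ^ k + wordVal k v.2 := rfl
      rw [hv, hpow, bigEndian_append (wordVal_lt k v.2)]
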